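/- arXiv:2308.13887 — 2 statements merged into one kernel-verified Lean document; each statement's English description precedes it below -/
import Mathlib

section
/- Let K_m be the complete graph on m vertices with m even. Then the blow-up ⊗^2 K_m admits perfect state transfer between (0,u) and (1,u) at time π/2 for every vertex u: the ((0,u),(1,u))-entry of exp(−i(π/2)(J_2 ⊗ A(K_m))) has modulus 1 (in fact equals −1). -/
/-!
With `J` the all-ones matrices, `A(⊗² K_V) = J₂ ⊗ J_V - J₂ ⊗ I`, and the two terms commute. Each
satisfies `M² = r M` (with `r = 2|V|` and `r = 2`), hence `exp (s M) = 1 + ((e^{rs} - 1)/r) M`, since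
`M / r` is idempotent. At `s = -iπ/2` with `|V|` even the first factor is `1` and the second is
`1 - J₂ ⊗ I`, whose `((0,u),(1,u))` entry is `-1`.
-/

/-- The blow-up of `n` copies of `G`. -/
def SimpleGraph.blowup {V : Type*} (n : ℕ) (G : SimpleGraph V) : SimpleGraph (ZMod n × V) :=
  G.comap Prod.snd

instance {V : Type*} {n : ℕ} (G : SimpleGraph V) [h : DecidableRel G.Adj] :
    DecidableRel (G.blowup n).Adj := fun x y => h x.2 y.2

open NormedSpace Matrix
open scoped Kronecker

theorem exp_smul_of_isIdempotentElem {𝔸 : Type*} [NormedRing 𝔸] [NormedAlgebra ℂ 𝔸]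
    [Algebra ℚ 𝔸] {e : 𝔸} (he : IsIdempotentElem e) (s : ℂ) :
    exp (s • e) = 1 + (Complex.exp s - 1) • e := by
  have he' : IsIdempotentElem (1 - e) := he.one_sub
  have h₁ : (1 - e) * e = 0 := by rw [sub_mul, he.eq, one_mul, sub_self]
  have h₂ : e * (1 - e) = 0 := by rw [mul_sub, he.eq, mul_one, sub_self]
  -- a ring map since `1 - e` and `e` are orthogonal idempotents summing to `1`
  let f : ℂ × ℂ →+* 𝔸 :=
    { toFun := fun p => p.1 • (1 - e) + p.2 • e
      map_one' := by simp
      map_mul' := by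
        rintro ⟨a, b⟩ ⟨c, d⟩
        simp only [Prod.mk_mul_mk, add_mul, mul_add, smul_mul_smul_comm, he'.eq, he.eq, h₁, h₂,
          smul_zero, add_zero, zero_add]
      map_zero' := by simp
      map_add' := by rintro ⟨a, b⟩ ⟨c, d⟩; simp only [Prod.fst_add, Prod.snd_add, add_smul]; abel }
  have hf : Continuous f := by
    change Continuous fun p : ℂ × ℂ => p.1 • (1 - e) + p.2 • e
    fun_prop
  have hexp : exp ((0 : ℂ), s) = (1, Complex.exp s) := by
    ext
    · simp
    · simp [Complex.exp_eq_exp_ℂ]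
  calc exp (s • e) = exp (f (0, s)) := by simp [f]
    _ = f (1, Complex.exp s) := by rw [← map_exp f hf, hexp]
    _ = 1 + (Complex.exp s - 1) • e := by simp only [f]; simp [sub_smul]; abel

theorem Matrix.exp_smul_of_mul_self_eq_smul {n : Type*} [Fintype n] [DecidableEq n]
    {M : Matrix n n ℂ} {r : ℂ} (hr : r ≠ 0) (hM : M * M = r • M) (s : ℂ) :
    exp (s • M) = 1 + ((Complex.exp (r * s) - 1) / r) • M := by
  let _ : NormedRing (Matrix n n ℂ) := Matrix.linftyOpNormedRing
  let _ : NormedAlgebra ℂ (Matrix n n ℂ) := Matrix.linftyOpNormedAlgebra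
  have he : IsIdempotentElem (r⁻¹ • M) := by
    rw [IsIdempotentElem, smul_mul_smul_comm, hM, smul_smul, inv_mul_cancel_right₀ hr]
  have hsM : s • M = (r * s) • r⁻¹ • M := by rw [smul_smul, mul_comm r, mul_inv_cancel_right₀ hr]
  rw [hsM]
  exact (exp_smul_of_isIdempotentElem he (r * s)).trans (by rw [smul_smul, div_eq_mul_inv])

theorem Matrix.of_one_mul_of_one {n α : Type*} [Fintype n] [NonAssocSemiring α] :
    (of 1 : Matrix n n α) * of 1 = (Fintype.card n : α) • of 1 := by
  ext i j
  simp [mul_apply]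

theorem SimpleGraph.adjMatrix_blowup {V α : Type*} (n : ℕ) (G : SimpleGraph V) [DecidableRel G.Adj]
    [MulZeroOneClass α] : (G.blowup n).adjMatrix α = of 1 ⊗ₖ G.adjMatrix α := by
  ext x y
  rw [kronecker_apply, adjMatrix_apply, adjMatrix_apply, of_apply, Pi.one_apply, Pi.one_apply,
    one_mul]
  rfl

theorem SimpleGraph.exp_adjMatrix_blowup_two_top_pi_div_two {V : Type*} [Fintype V] [DecidableEq V]
    (hV : Even (Fintype.card V)) :
    exp ((-(Complex.I * (Real.pi / 2))) • ((⊤ : SimpleGraph V).blowup 2).adjMatrix ℂ) =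
      1 - of 1 ⊗ₖ (1 : Matrix V V ℂ) := by
  rcases isEmpty_or_nonempty V with _ | _
  · exact Subsingleton.elim _ _
  set c : ℂ := -(Complex.I * (Real.pi / 2))
  set J₂ : Matrix (ZMod 2) (ZMod 2) ℂ := of 1
  set J : Matrix V V ℂ := of 1
  have hJ₂ : J₂ * J₂ = (2 : ℂ) • J₂ := by rw [of_one_mul_of_one, ZMod.card, Nat.cast_ofNat]
  have hJ : J * J = (Fintype.card V : ℂ) • J := of_one_mul_of_one
  have hA : ((⊤ : SimpleGraph V).blowup 2).adjMatrix ℂ = J₂ ⊗ₖ J - J₂ ⊗ₖ 1 := by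
    rw [SimpleGraph.adjMatrix_blowup, SimpleGraph.adjMatrix_completeGraph_eq_of_one_sub_one]
    ext
    simp [J₂, J, mul_sub]
  have hJJ : (J₂ ⊗ₖ J) * (J₂ ⊗ₖ J) = (2 * Fintype.card V : ℂ) • (J₂ ⊗ₖ J) := by
    rw [← mul_kronecker_mul, hJ₂, hJ, smul_kronecker, kronecker_smul, smul_smul]
  have hJ1 : (J₂ ⊗ₖ 1) * (J₂ ⊗ₖ 1) = (2 : ℂ) • (J₂ ⊗ₖ (1 : Matrix V V ℂ)) := by
    rw [← mul_kronecker_mul, hJ₂, mul_one, smul_kronecker]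
  have hcomm : Commute (c • J₂ ⊗ₖ J) ((-c) • J₂ ⊗ₖ (1 : Matrix V V ℂ)) := by
    refine Commute.smul_left (Commute.smul_right ?_ _) _
    rw [Commute, SemiconjBy, ← mul_kronecker_mul, ← mul_kronecker_mul, mul_one, one_mul]
  have hexpJJ : exp (c • J₂ ⊗ₖ J) = 1 := by
    obtain ⟨k, hk⟩ := hV
    have hr : (2 * Fintype.card V : ℂ) ≠ 0 := by simp
    have hexp : Complex.exp (2 * Fintype.card V * c) = 1 := by
      convert Complex.exp_int_mul_two_pi_mul_I (-k) using 2
      simp only [c, hk]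
      push_cast
      ring
    rw [exp_smul_of_mul_self_eq_smul hr hJJ, hexp, sub_self, zero_div, zero_smul, add_zero]
  have hexpJ1 : exp ((-c) • J₂ ⊗ₖ (1 : Matrix V V ℂ)) = 1 - J₂ ⊗ₖ 1 := by
    have hexp : Complex.exp (2 * -c) = -1 := by
      convert Complex.exp_pi_mul_I using 2
      simp only [c]
      ring
    rw [exp_smul_of_mul_self_eq_smul two_ne_zero hJ1, hexp]
    norm_num [sub_eq_add_neg]
  rw [hA, smul_sub, sub_eq_add_neg, ← neg_smul, exp_add_of_commute _ _ hcomm, hexpJJ, hexpJ1,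
    one_mul]

/-- For `m` even, the blow-up `⊗² K_m` admits perfect state transfer between `(0,u)` and
`(1,u)` at time `π/2`: the corresponding entry of the transition matrix equals `−1` (and hence
has modulus `1`). -/
theorem blowup_complete_pst (m : ℕ) (hm : Even m) (u : Fin m) :
    ‖NormedSpace.exp
        ((-(Complex.I * (Real.pi / 2))) •
          ((⊤ : SimpleGraph (Fin m)).blowup 2).adjMatrix ℂ) (0, u) (1, u)‖ = 1 ∧
    NormedSpace.exp
        ((-(Complex.I * (Real.pi / 2))) •
          ((⊤ : SimpleGraph (Fin m)).blowup 2).adjMatrix ℂ) (0, u) (1, u) = -1 := by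
  have hentry : NormedSpace.exp ((-(Complex.I * (Real.pi / 2))) •
      ((⊤ : SimpleGraph (Fin m)).blowup 2).adjMatrix ℂ) (0, u) (1, u) = -1 := by
    rw [SimpleGraph.exp_adjMatrix_blowup_two_top_pi_div_two (by rwa [Fintype.card_fin])]
    simp [one_apply]
  exact ⟨by rw [hentry, norm_neg, norm_one], hentry⟩
end

section
/- Let G = K_1 + H be the cone over a k-regular graph H on m vertices, with apex u. Then the eigenvalue support of u in G is exactly {λ_+, λ_−} where λ_± = (k ± √(k² + 4m))/2; consequently exp(−iτ' A(G)) has |(u,u)-entry| = 1 at τ' = 2π/√(k² + 4m), i.e., u is periodic in G at that time. -/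
open scoped Classical

/-- The cone over `H`: a new apex vertex (`none`) adjacent to every vertex of `H`, keeping
all edges of `H`. -/
def cone {V : Type*} (H : SimpleGraph V) : SimpleGraph (Option V) :=
  SimpleGraph.fromRel (fun x y =>
    (x = none ∧ y ≠ none) ∨ (∃ a b, x = some a ∧ y = some b ∧ H.Adj a b))

/-- `λ ∈ σ_u` for the symmetric matrix `A`. -/
def SuppMem {V : Type*} [Fintype V] (A : Matrix V V ℝ) (lam : ℝ) (u : V) : Prop :=
  ∃ x : V → ℝ, A.mulVec x = lam • x ∧ x u ≠ 0

/-!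
By regularity, the plane spanned by the apex indicator and the all-ones vector on `H` is
invariant under `A(G)`; the vector equal to `1` at the apex and to `c` on `H` is an eigenvector
exactly when `c = λ / m` with `λ² = kλ + m`. Conversely, summing the eigenvalue equations over
the vertices of `H` shows that an eigenvector not vanishing at the apex has such an eigenvalue.
The apex indicator lies in the span of the eigenvectors for the two roots `λ₊`, `λ₋`, and at
time `τ = 2π / (λ₊ - λ₋)` the phases `exp(-iτλ₊)` and `exp(-iτλ₋)` agree, so the indicator is an
eigenvector of `exp(-iτA)` whose eigenvalue has modulus one.
-/

open Matrix
open scoped Nat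

namespace Matrix

variable {n : Type*} [Fintype n] [DecidableEq n]

theorem exp_mulVec_of_mulVec_eq_smul {M : Matrix n n ℂ} {v : n → ℂ} {μ : ℂ}
    (h : M *ᵥ v = μ • v) : NormedSpace.exp M *ᵥ v = Complex.exp μ • v := by
  have hpow (p : ℕ) : M ^ p *ᵥ v = μ ^ p • v := by
    induction p with
    | zero => simp
    | succ p ih =>
      rw [pow_succ, ← mulVec_mulVec, h, mulVec_smul, ih, smul_smul, _root_.pow_succ']
  have hM : HasSum (fun p : ℕ => (p !⁻¹ : ℂ) • M ^ p) (NormedSpace.exp M) := by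
    open scoped Norms.Operator in exact NormedSpace.exp_series_hasSum_exp' M
  refine (hM.map (mulVec.addMonoidHomLeft v)
    (continuous_id.matrix_mulVec continuous_const)).unique ?_
  rw [Complex.exp_eq_exp_ℂ]
  convert (NormedSpace.exp_series_hasSum_exp' (𝕂 := ℂ) μ).smul_const v using 1
  funext p
  simp [mulVec.addMonoidHomLeft, smul_mulVec, hpow, smul_smul]

theorem exp_mulVec_add_of_exp_eq {M : Matrix n n ℂ} {v w : n → ℂ} {μ ν : ℂ}
    (hv : M *ᵥ v = μ • v) (hw : M *ᵥ w = ν • w) (hμν : Complex.exp μ = Complex.exp ν)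
    (a b : ℂ) :
    NormedSpace.exp M *ᵥ (a • v + b • w) = Complex.exp μ • (a • v + b • w) := by
  rw [mulVec_add, mulVec_smul, mulVec_smul, exp_mulVec_of_mulVec_eq_smul hv,
    exp_mulVec_of_mulVec_eq_smul hw, hμν, smul_add, smul_comm _ a, smul_comm _ b]

end Matrix

theorem mul_self_eq_mul_add_iff {b c x : ℝ} (h : 0 ≤ b ^ 2 + 4 * c) :
    x * x = b * x + c ↔
      x = (b + √(b ^ 2 + 4 * c)) / 2 ∨ x = (b - √(b ^ 2 + 4 * c)) / 2 := by
  have hd : discrim 1 (-b) (-c) = √(b ^ 2 + 4 * c) * √(b ^ 2 + 4 * c) := by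
    rw [Real.mul_self_sqrt h, discrim]
    ring
  have := quadratic_eq_zero_iff one_ne_zero hd x
  simp only [neg_neg, mul_one, one_mul] at this
  rw [← this]
  constructor <;> intro h <;> linarith

theorem SimpleGraph.sum_adjMatrix_mulVec_of_isRegularOfDegree {V R : Type*} [Fintype V]
    [Semiring R] {H : SimpleGraph V} [DecidableRel H.Adj] {d : ℕ}
    (hd : H.IsRegularOfDegree d) (y : V → R) :
    ∑ a, (H.adjMatrix R *ᵥ y) a = d * ∑ a, y a := by
  rw [← one_dotProduct, dotProduct_mulVec, Finset.mul_sum]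
  refine Finset.sum_congr rfl fun u _ => ?_
  simp [hd u]

section Cone

variable {V : Type*} (H : SimpleGraph V) {R : Type*}

@[simp]
theorem cone_adj_none_some (v : V) : (cone H).Adj none (some v) := by
  simp [cone]

@[simp]
theorem cone_adj_some_some (a b : V) : (cone H).Adj (some a) (some b) ↔ H.Adj a b := by
  simpa [cone, H.adj_comm b a] using fun h : H.Adj a b => h.ne

variable (V) in
def coneVec [One R] (c : R) : Option V → R := fun o => o.elim 1 fun _ => c

theorem single_none_mem_span_coneVec [Field R] [DecidableEq V] {a b : R} (hab : a ≠ b) :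
    Pi.single none 1 ∈ Submodule.span R {coneVec V a, coneVec V b} := by
  have hab' : b - a ≠ 0 := sub_ne_zero.mpr hab.symm
  refine Submodule.mem_span_pair.mpr ⟨b / (b - a), a / (a - b), funext fun o => ?_⟩
  cases o with
  | none =>
    simp only [coneVec, Pi.single_eq_same, Pi.add_apply, Pi.smul_apply, Option.elim,
      smul_eq_mul]
    field_simp
    ring
  | some v =>
    simp only [coneVec, Pi.add_apply, Pi.smul_apply, Option.elim, smul_eq_mul]
    rw [Pi.single_eq_of_ne (by simp)]
    field_simp
    ring

variable [Fintype V]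

theorem cone_adjMatrix_mulVec_none [NonAssocSemiring R] (x : Option V → R) :
    ((cone H).adjMatrix R *ᵥ x) none = ∑ v, x (some v) := by
  simp [mulVec, dotProduct, Fintype.sum_option]

variable [DecidableRel H.Adj]

theorem cone_adjMatrix_mulVec_some [NonAssocSemiring R] (x : Option V → R) (a : V) :
    ((cone H).adjMatrix R *ᵥ x) (some a) = x none + (H.adjMatrix R *ᵥ (x ∘ some)) a := by
  simp [mulVec, dotProduct, Fintype.sum_option, (cone_adj_none_some H a).symm]

theorem cone_adjMatrix_mulVec_coneVec [Field R] {k : ℕ} (hd : H.IsRegularOfDegree k)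
    (hV : (Fintype.card V : R) ≠ 0) {l : R} (hl : l * l = k * l + Fintype.card V) :
    (cone H).adjMatrix R *ᵥ coneVec V (l / Fintype.card V) =
      l • coneVec V (l / Fintype.card V) := by
  funext o
  cases o with
  | none =>
    rw [cone_adjMatrix_mulVec_none]
    simp [coneVec, mul_div_cancel₀ _ hV]
  | some a =>
    have hconst : (coneVec V (l / Fintype.card V) ∘ some : V → R) =
        Function.const V (l / Fintype.card V) := rfl
    rw [cone_adjMatrix_mulVec_some, hconst,
      SimpleGraph.adjMatrix_mulVec_const_apply_of_regular hd]
    simp only [coneVec, Option.elim, Pi.smul_apply, smul_eq_mul]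
    field_simp
    linear_combination hl.symm

theorem mul_self_eq_of_cone_adjMatrix_mulVec_eq_smul [CommRing R] [NoZeroDivisors R] {k : ℕ}
    (hd : H.IsRegularOfDegree k) {x : Option V → R} {l : R}
    (hx : (cone H).adjMatrix R *ᵥ x = l • x) (hx0 : x none ≠ 0) :
    l * l = k * l + Fintype.card V := by
  have hapex : ∑ v, x (some v) = l * x none := by
    simpa using (cone_adjMatrix_mulVec_none H x).symm.trans (congrFun hx none)
  have hbase : Fintype.card V * x none + k * ∑ v, x (some v) = l * ∑ v, x (some v) := by
    have := Finset.sum_congr rfl fun a (_ : a ∈ Finset.univ) => congrFun hx (some a)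
    simp only [cone_adjMatrix_mulVec_some, Finset.sum_add_distrib,
      H.sum_adjMatrix_mulVec_of_isRegularOfDegree hd] at this
    simpa [Finset.mul_sum] using this
  rw [hapex] at hbase
  refine mul_left_injective₀ hx0 ?_
  linear_combination -hbase

theorem exp_smul_cone_adjMatrix_apply_none_none [DecidableEq V] {k : ℕ}
    (hd : H.IsRegularOfDegree k) (hV : (Fintype.card V : ℂ) ≠ 0) {l₁ l₂ t : ℂ}
    (h₁ : l₁ * l₁ = k * l₁ + Fintype.card V) (h₂ : l₂ * l₂ = k * l₂ + Fintype.card V)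
    (hne : l₁ ≠ l₂) (hexp : Complex.exp (t * l₁) = Complex.exp (t * l₂)) :
    NormedSpace.exp (t • (cone H).adjMatrix ℂ) none none = Complex.exp (t * l₁) := by
  have heigen {l : ℂ} (hl : l * l = k * l + Fintype.card V) :
      (t • (cone H).adjMatrix ℂ) *ᵥ coneVec V (l / Fintype.card V) =
        (t * l) • coneVec V (l / Fintype.card V) := by
    rw [smul_mulVec, cone_adjMatrix_mulVec_coneVec H hd hV hl, smul_smul]
  obtain ⟨a, b, hab⟩ := Submodule.mem_span_pair.mp
    (single_none_mem_span_coneVec (V := V) ((div_left_inj' hV).not.mpr hne))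
  have := congrFun (exp_mulVec_add_of_exp_eq (heigen h₁) (heigen h₂) hexp a b) none
  rw [hab, mulVec_single_one] at this
  simpa using this

theorem norm_exp_smul_cone_adjMatrix_apply_none_none [DecidableEq V] {k : ℕ}
    (hd : H.IsRegularOfDegree k) (hV : Fintype.card V ≠ 0) :
    ‖(NormedSpace.exp
        ((-(Complex.I * (2 * Real.pi / Real.sqrt ((k : ℝ) ^ 2 + 4 * Fintype.card V)))) •
          (cone H).adjMatrix ℂ) none none)‖ = 1 := by
  set Δ := Real.sqrt ((k : ℝ) ^ 2 + 4 * Fintype.card V)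
  have hΔ : 0 < Δ := Real.sqrt_pos.mpr (by positivity)
  have hΔ' : (Δ : ℂ) ≠ 0 := by exact_mod_cast hΔ.ne'
  have hroot {l : ℝ} (hl : l = (k + Δ) / 2 ∨ l = (k - Δ) / 2) :
      (l : ℂ) * l = k * l + Fintype.card V := by
    exact_mod_cast (mul_self_eq_mul_add_iff (by positivity)).mpr hl
  have hphase : -(Complex.I * (2 * Real.pi / Δ)) * ((k + Δ) / 2 : ℝ) =
      -(Complex.I * (2 * Real.pi / Δ)) * ((k - Δ) / 2 : ℝ) - 2 * Real.pi * Complex.I := by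
    push_cast
    field_simp
    ring
  rw [exp_smul_cone_adjMatrix_apply_none_none H hd (by exact_mod_cast hV) (hroot (.inl rfl))
    (hroot (.inr rfl)) (by norm_cast; linarith) (by rw [hphase, Complex.exp_periodic.sub_eq])]
  convert Complex.norm_exp_ofReal_mul_I (-(2 * Real.pi / Δ * ((k + Δ) / 2))) using 3
  push_cast
  ring

end Cone

/-- For the cone `G = K₁ + H` over a `k`-regular graph `H` on `m ≥ 1` vertices, the eigenvalue
support of the apex is exactly `{(k ± √(k²+4m))/2}`, and the apex is periodic at time
`2π/√(k²+4m)`. -/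
theorem cone_apex_support_and_periodic {V : Type*} [Fintype V] [DecidableEq V]
    (H : SimpleGraph V) [DecidableRel H.Adj] (k m : ℕ)
    (hm : Fintype.card V = m) (hm1 : 1 ≤ m)
    (hreg : ∀ v : V, H.degree v = k) :
    {lam : ℝ | SuppMem ((cone H).adjMatrix ℝ) lam none} =
      {((k : ℝ) + Real.sqrt ((k : ℝ) ^ 2 + 4 * m)) / 2,
        ((k : ℝ) - Real.sqrt ((k : ℝ) ^ 2 + 4 * m)) / 2} ∧
    ‖(NormedSpace.exp
        ((-(Complex.I * (2 * Real.pi / Real.sqrt ((k : ℝ) ^ 2 + 4 * m)))) •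
          (cone H).adjMatrix ℂ) none none)‖ = 1 := by
  subst hm
  have hV : Fintype.card V ≠ 0 := by omega
  refine ⟨?_, norm_exp_smul_cone_adjMatrix_apply_none_none H hreg hV⟩
  ext l
  rw [Set.mem_ofPred_eq, Set.mem_insert_iff, Set.mem_singleton_iff,
    ← mul_self_eq_mul_add_iff (by positivity)]
  exact ⟨fun ⟨x, hx, hx0⟩ => mul_self_eq_of_cone_adjMatrix_mulVec_eq_smul H hreg hx hx0,
    fun hl => ⟨_, cone_adjMatrix_mulVec_coneVec H hreg (by exact_mod_cast hV) hl,
      by simp [coneVec]⟩⟩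
end
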